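/- (Laurent expansion, right version.) Let ζ₀ ∈ E₃, ξ₁₀ = f₁(ζ₀), ξ₂₀ = f₂(ζ₀), and 0 ≤ r < R ≤ ∞. Let F₁, F₃ be holomorphic on the annulus {ξ ∈ ℂ : r < |ξ − ξ₁₀| < R} with Laurent expansions F₁(ξ) = ∑_{n∈ℤ} aₙ(ξ − ξ₁₀)ⁿ, F₃(ξ) = ∑_{n∈ℤ} cₙ(ξ − ξ₁₀)ⁿ, and F₂, F₄ holomorphic on {ξ ∈ ℂ : r < |ξ − ξ₂₀| < R} with Laurent expansions F₂(ξ) = ∑_{n∈ℤ} bₙ(ξ − ξ₂₀)ⁿ, F₄(ξ) = ∑_{n∈ℤ} dₙ(ξ − ξ₂₀)ⁿ. Define Φ on K_ζ = {ζ ∈ E₃ : r < |f₁(ζ) − ξ₁₀| < R, r < |f₂(ζ) − ξ₂₀| < R} by Φ(ζ) = F₁(ξ₁)e₁ + F₂(ξ₂)e₂ + F₃(ξ₁)e₃ + F₄(ξ₂)e₄ with ξ₁ = f₁(ζ), ξ₂ = f₂(ζ). Then for every ζ ∈ K_ζ the two-sided series ∑_{n∈ℤ} (ζ − ζ₀)ⁿ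 pₙ, with pₙ = aₙe₁ + bₙe₂ + cₙe₃ + dₙe₄ and (ζ − ζ₀)ⁿ := ((ζ − ζ₀)⁻¹)^(−n) for negative n, converges absolutely in the norm of ℍ(ℂ) and its sum equals Φ(ζ). -/

import Mathlib

noncomputable section

/-- The algebra of complex quaternions ℍ(ℂ): quaternions over ℂ with
I² = J² = K² = -1, IJ = -JI = K, JK = -KJ = I, KI = -IK = J. -/
abbrev HC : Type := Quaternion ℂ

/-- The quaternion unit I. -/
def Iq : HC := ⟨0, 1, 0, 0⟩
/-- The quaternion unit J. -/
def Jq : HC := ⟨0, 0, 1, 0⟩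
/-- The quaternion unit K. -/
def Kq : HC := ⟨0, 0, 0, 1⟩

/-- e₁ = (1 + iI)/2. -/
def e1 : HC := (2 : ℂ)⁻¹ • (1 + Complex.I • Iq)
/-- e₂ = (1 - iI)/2. -/
def e2 : HC := (2 : ℂ)⁻¹ • (1 - Complex.I • Iq)
/-- e₃ = (iJ - K)/2. -/
def e3 : HC := (2 : ℂ)⁻¹ • (Complex.I • Jq - Kq)
/-- e₄ = (iJ + K)/2. -/
def e4 : HC := (2 : ℂ)⁻¹ • (Complex.I • Jq + Kq)

/-- The coefficient c₁ of q in the basis {e₁,e₂,e₃,e₄} (q = c₁e₁ + c₂e₂ + c₃e₃ + c₄e₄). -/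
def coord1 (q : HC) : ℂ := q.re - Complex.I * q.imI
/-- The coefficient c₂ of q in the basis {e₁,e₂,e₃,e₄}. -/
def coord2 (q : HC) : ℂ := q.re + Complex.I * q.imI
/-- The coefficient c₃ of q in the basis {e₁,e₂,e₃,e₄}. -/
def coord3 (q : HC) : ℂ := -(Complex.I * q.imJ) - q.imK
/-- The coefficient c₄ of q in the basis {e₁,e₂,e₃,e₄}. -/
def coord4 (q : HC) : ℂ := -(Complex.I * q.imJ) + q.imK

/-- The norm ‖c‖ = √(|c₁|² + |c₂|² + |c₃|² + |c₄|²) of c = c₁e₁ + c₂e₂ + c₃e₃ + c₄e₄. -/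
def hnorm (q : HC) : ℝ :=
  Real.sqrt (‖coord1 q‖ ^ 2 + ‖coord2 q‖ ^ 2 +
    ‖coord3 q‖ ^ 2 + ‖coord4 q‖ ^ 2)

/-- i₂ = a₁e₁ + a₂e₂. -/
def i2 (a₁ a₂ : ℂ) : HC := a₁ • e1 + a₂ • e2
/-- i₃ = b₁e₁ + b₂e₂. -/
def i3 (b₁ b₂ : ℂ) : HC := b₁ • e1 + b₂ • e2

/-- ζ = x·i₁ + y·i₂ + z·i₃ with i₁ = 1. -/
def zeta (a₁ a₂ b₁ b₂ : ℂ) (x y z : ℝ) : HC :=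
  (x : ℂ) • (1 : HC) + (y : ℂ) • i2 a₁ a₂ + (z : ℂ) • i3 b₁ b₂

/-- E₃ = {x i₁ + y i₂ + z i₃ : x, y, z ∈ ℝ}. -/
def E3 (a₁ a₂ b₁ b₂ : ℂ) : Set HC :=
  {q | ∃ x y z : ℝ, q = zeta a₁ a₂ b₁ b₂ x y z}

/-- ξ₁ = f₁(ζ) = x + y a₁ + z b₁. -/
def xi1 (a₁ b₁ : ℂ) (x y z : ℝ) : ℂ := (x : ℂ) + (y : ℂ) * a₁ + (z : ℂ) * b₁
/-- ξ₂ = f₂(ζ) = x + y a₂ + z b₂. -/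
def xi2 (a₂ b₂ : ℂ) (x y z : ℝ) : ℂ := (x : ℂ) + (y : ℂ) * a₂ + (z : ℂ) * b₂

/-- Integer powers in ℍ(ℂ): for n < 0, qⁿ := (q⁻¹)^(-n) where q⁻¹ = Ring.inverse q. -/
def zpowQ (q : HC) (n : ℤ) : HC :=
  if 0 ≤ n then q ^ n.toNat else (Ring.inverse q) ^ (-n).toNat

/-- A two-sided (ℤ-indexed) series ∑ f n converges unconditionally to s in the norm
of ℍ(ℂ). -/
def ZSeriesTendsto (f : ℤ → HC) (s : HC) : Prop :=
  Filter.Tendsto (fun A : Finset ℤ => hnorm ((∑ n ∈ A, f n) - s))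
    Filter.atTop (nhds 0)

/-!
In the idempotent basis, ζ − ζ₀ = (ξ₁ − ξ₁₀) e₁ + (ξ₂ − ξ₂₀) e₂ is diagonal, and left
multiplication by a diagonal element u e₁ + v e₂ acts on coordinates as
(c₁, c₂, c₃, c₄) ↦ (u c₁, v c₂, u c₃, v c₄). Hence the n-th term of the quaternionic series has
coordinates aₙw₁ⁿ, bₙw₂ⁿ, cₙw₁ⁿ, dₙw₂ⁿ with wₖ = ξₖ − ξₖ₀, and the series splits into the four
scalar Laurent series. A summable family in ℂ is absolutely summable, and the norm of ℍ(ℂ) is at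
most the sum of the moduli of the coordinates, which gives absolute convergence and the sum.
-/

open Complex Filter Topology

-- The units and the `ℂ`-action on `HC` agree with Mathlib's `Quaternion` ones only up to
-- unfolding, so `simp` lemmas about the latter do not fire here: the components of the units are
-- recorded by `rfl`, and module identities are proved by `module` or applied as terms.
@[simp] lemma one_components :
    (1 : HC).re = 1 ∧ (1 : HC).imI = 0 ∧ (1 : HC).imJ = 0 ∧ (1 : HC).imK = 0 :=
  ⟨rfl, rfl, rfl, rfl⟩

@[simp] lemma Iq_components : Iq.re = 0 ∧ Iq.imI = 1 ∧ Iq.imJ = 0 ∧ Iq.imK = 0 :=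
  ⟨rfl, rfl, rfl, rfl⟩

@[simp] lemma Jq_components : Jq.re = 0 ∧ Jq.imI = 0 ∧ Jq.imJ = 1 ∧ Jq.imK = 0 :=
  ⟨rfl, rfl, rfl, rfl⟩

@[simp] lemma Kq_components : Kq.re = 0 ∧ Kq.imI = 0 ∧ Kq.imJ = 0 ∧ Kq.imK = 1 :=
  ⟨rfl, rfl, rfl, rfl⟩

lemma e1_add_e2 : e1 + e2 = 1 := by
  ext <;> norm_num [e1, e2]

lemma diag_mul_quad (u v p q s t : ℂ) :
    (u • e1 + v • e2) * (p • e1 + q • e2 + s • e3 + t • e4) =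
      (u * p) • e1 + (v * q) • e2 + (u * s) • e3 + (v * t) • e4 := by
  ext <;>
    simp [e1, e2, e3, e4, Quaternion.re_mul, Quaternion.imI_mul, Quaternion.imJ_mul,
      Quaternion.imK_mul] <;>
    ring_nf <;> simp only [I_sq] <;> ring

lemma diag_mul_diag (u v p q : ℂ) :
    (u • e1 + v • e2) * (p • e1 + q • e2) = (u * p) • e1 + (v * q) • e2 := by
  have h := diag_mul_quad u v p q 0 0
  rw [show p • e1 + q • e2 + (0 : ℂ) • e3 + (0 : ℂ) • e4 = p • e1 + q • e2 by module] at h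
  rw [h]
  module

lemma diag_pow (u v : ℂ) (m : ℕ) : (u • e1 + v • e2) ^ m = (u ^ m) • e1 + (v ^ m) • e2 := by
  induction m with
  | zero => simp [e1_add_e2]
  | succ m ih => rw [pow_succ, ih, diag_mul_diag, ← pow_succ, ← pow_succ]

lemma ring_inverse_diag {u v : ℂ} (hu : u ≠ 0) (hv : v ≠ 0) :
    Ring.inverse (u • e1 + v • e2) = u⁻¹ • e1 + v⁻¹ • e2 := by
  refine Ring.inverse_unit ⟨u • e1 + v • e2, u⁻¹ • e1 + v⁻¹ • e2, ?_, ?_⟩ <;>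
    simp [diag_mul_diag, hu, hv, e1_add_e2]

lemma zpowQ_diag {u v : ℂ} (hu : u ≠ 0) (hv : v ≠ 0) (n : ℤ) :
    zpowQ (u • e1 + v • e2) n = (u ^ n) • e1 + (v ^ n) • e2 := by
  cases n with
  | ofNat m => simp [zpowQ, diag_pow]
  | negSucc m =>
    rw [zpowQ, if_neg (Int.negSucc_lt_zero m).not_ge, ring_inverse_diag hu hv, diag_pow]
    simp [zpow_negSucc, inv_pow]

lemma zeta_sub_zeta (a₁ a₂ b₁ b₂ : ℂ) (x y z x₀ y₀ z₀ : ℝ) :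
    zeta a₁ a₂ b₁ b₂ x y z - zeta a₁ a₂ b₁ b₂ x₀ y₀ z₀ =
      (xi1 a₁ b₁ x y z - xi1 a₁ b₁ x₀ y₀ z₀) • e1 +
        (xi2 a₂ b₂ x y z - xi2 a₂ b₂ x₀ y₀ z₀) • e2 := by
  ext <;> simp [zeta, i2, i3, xi1, xi2, e1, e2, -Complex.coe_smul] <;> ring

lemma coords_quad (p q s t : ℂ) :
    coord1 (p • e1 + q • e2 + s • e3 + t • e4) = p ∧
      coord2 (p • e1 + q • e2 + s • e3 + t • e4) = q ∧
      coord3 (p • e1 + q • e2 + s • e3 + t • e4) = s ∧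
      coord4 (p • e1 + q • e2 + s • e3 + t • e4) = t := by
  refine ⟨?_, ?_, ?_, ?_⟩ <;>
    simp [coord1, coord2, coord3, coord4, e1, e2, e3, e4] <;>
    ring_nf <;> simp only [I_sq] <;> ring

lemma hnorm_quad_le (p q s t : ℂ) :
    hnorm (p • e1 + q • e2 + s • e3 + t • e4) ≤ ‖p‖ + ‖q‖ + ‖s‖ + ‖t‖ := by
  obtain ⟨h₁, h₂, h₃, h₄⟩ := coords_quad p q s t
  rw [hnorm, h₁, h₂, h₃, h₄]
  refine Real.sqrt_le_iff.mpr ⟨by positivity, ?_⟩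
  nlinarith [norm_nonneg p, norm_nonneg q, norm_nonneg s, norm_nonneg t]

lemma sum_quad {ι : Type*} (A : Finset ι) (P Q S T : ι → ℂ) :
    ∑ n ∈ A, (P n • e1 + Q n • e2 + S n • e3 + T n • e4) =
      (∑ n ∈ A, P n) • e1 + (∑ n ∈ A, Q n) • e2 + (∑ n ∈ A, S n) • e3 +
        (∑ n ∈ A, T n) • e4 := by
  have sum_smul (f : ι → ℂ) (x : HC) : ∑ n ∈ A, f n • x = (∑ n ∈ A, f n) • x :=
    (Finset.sum_smul ..).symm
  simp only [Finset.sum_add_distrib, sum_smul]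

lemma quad_sub_quad (p q s t p' q' s' t' : ℂ) :
    (p • e1 + q • e2 + s • e3 + t • e4) - (p' • e1 + q' • e2 + s' • e3 + t' • e4) =
      (p - p') • e1 + (q - q') • e2 + (s - s') • e3 + (t - t') • e4 := by
  module

lemma summable_hnorm_quad {ι : Type*} {P Q S T : ι → ℂ} (hP : Summable P) (hQ : Summable Q)
    (hS : Summable S) (hT : Summable T) :
    Summable fun n => hnorm (P n • e1 + Q n • e2 + S n • e3 + T n • e4) :=
  .of_nonneg_of_le (fun _ => Real.sqrt_nonneg _) (fun _ => hnorm_quad_le _ _ _ _)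
    ((((summable_norm_iff.mpr hP).add (summable_norm_iff.mpr hQ)).add
      (summable_norm_iff.mpr hS)).add (summable_norm_iff.mpr hT))

lemma zSeriesTendsto_quad {P Q S T : ℤ → ℂ} {p q s t : ℂ} (hP : HasSum P p) (hQ : HasSum Q q)
    (hS : HasSum S s) (hT : HasSum T t) :
    ZSeriesTendsto (fun n => P n • e1 + Q n • e2 + S n • e3 + T n • e4)
      (p • e1 + q • e2 + s • e3 + t • e4) := by
  have hdist {f : ℤ → ℂ} {a : ℂ} (h : HasSum f a) :
      Tendsto (fun A : Finset ℤ => ‖∑ n ∈ A, f n - a‖) atTop (𝓝 0) :=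
    tendsto_iff_norm_sub_tendsto_zero.mp h
  refine squeeze_zero (fun _ => Real.sqrt_nonneg _) (fun A => ?_)
    (by simpa using (((hdist hP).add (hdist hQ)).add (hdist hS)).add (hdist hT))
  rw [sum_quad, quad_sub_quad]
  exact hnorm_quad_le _ _ _ _

theorem laurent_right_general (a₁ a₂ b₁ b₂ : ℂ) (x₀ y₀ z₀ : ℝ) (r R : ENNReal)
    (F₁ F₂ F₃ F₄ : ℂ → ℂ) (a b c d : ℤ → ℂ)
    (ha : ∀ ξ : ℂ, r < ENNReal.ofReal (‖ξ - xi1 a₁ b₁ x₀ y₀ z₀‖) →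
      ENNReal.ofReal (‖ξ - xi1 a₁ b₁ x₀ y₀ z₀‖) < R →
      HasSum (fun n : ℤ => a n * (ξ - xi1 a₁ b₁ x₀ y₀ z₀) ^ n) (F₁ ξ))
    (hc : ∀ ξ : ℂ, r < ENNReal.ofReal (‖ξ - xi1 a₁ b₁ x₀ y₀ z₀‖) →
      ENNReal.ofReal (‖ξ - xi1 a₁ b₁ x₀ y₀ z₀‖) < R →
      HasSum (fun n : ℤ => c n * (ξ - xi1 a₁ b₁ x₀ y₀ z₀) ^ n) (F₃ ξ))
    (hb : ∀ ξ : ℂ, r < ENNReal.ofReal (‖ξ - xi2 a₂ b₂ x₀ y₀ z₀‖) →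
      ENNReal.ofReal (‖ξ - xi2 a₂ b₂ x₀ y₀ z₀‖) < R →
      HasSum (fun n : ℤ => b n * (ξ - xi2 a₂ b₂ x₀ y₀ z₀) ^ n) (F₂ ξ))
    (hd : ∀ ξ : ℂ, r < ENNReal.ofReal (‖ξ - xi2 a₂ b₂ x₀ y₀ z₀‖) →
      ENNReal.ofReal (‖ξ - xi2 a₂ b₂ x₀ y₀ z₀‖) < R →
      HasSum (fun n : ℤ => d n * (ξ - xi2 a₂ b₂ x₀ y₀ z₀) ^ n) (F₄ ξ))
    (x y z : ℝ)
    (h₁l : r < ENNReal.ofReal (‖xi1 a₁ b₁ x y z - xi1 a₁ b₁ x₀ y₀ z₀‖))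
    (h₁r : ENNReal.ofReal (‖xi1 a₁ b₁ x y z - xi1 a₁ b₁ x₀ y₀ z₀‖) < R)
    (h₂l : r < ENNReal.ofReal (‖xi2 a₂ b₂ x y z - xi2 a₂ b₂ x₀ y₀ z₀‖))
    (h₂r : ENNReal.ofReal (‖xi2 a₂ b₂ x y z - xi2 a₂ b₂ x₀ y₀ z₀‖) < R) :
    Summable (fun n : ℤ =>
      hnorm (zpowQ (zeta a₁ a₂ b₁ b₂ x y z - zeta a₁ a₂ b₁ b₂ x₀ y₀ z₀) n *
        (a n • e1 + b n • e2 + c n • e3 + d n • e4))) ∧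
    ZSeriesTendsto (fun n : ℤ =>
      zpowQ (zeta a₁ a₂ b₁ b₂ x y z - zeta a₁ a₂ b₁ b₂ x₀ y₀ z₀) n *
        (a n • e1 + b n • e2 + c n • e3 + d n • e4))
      (F₁ (xi1 a₁ b₁ x y z) • e1 + F₂ (xi2 a₂ b₂ x y z) • e2 +
       F₃ (xi1 a₁ b₁ x y z) • e3 + F₄ (xi2 a₂ b₂ x y z) • e4) := by
  set w₁ := xi1 a₁ b₁ x y z - xi1 a₁ b₁ x₀ y₀ z₀
  set w₂ := xi2 a₂ b₂ x y z - xi2 a₂ b₂ x₀ y₀ z₀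
  have hw₁ : w₁ ≠ 0 := by rintro h; simp [h] at h₁l
  have hw₂ : w₂ ≠ 0 := by rintro h; simp [h] at h₂l
  have hterm (n : ℤ) :
      zpowQ (zeta a₁ a₂ b₁ b₂ x y z - zeta a₁ a₂ b₁ b₂ x₀ y₀ z₀) n *
          (a n • e1 + b n • e2 + c n • e3 + d n • e4) =
        (a n * w₁ ^ n) • e1 + (b n * w₂ ^ n) • e2 + (c n * w₁ ^ n) • e3 +
          (d n * w₂ ^ n) • e4 := by
    rw [zeta_sub_zeta, zpowQ_diag hw₁ hw₂, diag_mul_quad]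
    simp only [mul_comm]
  have hA := ha _ h₁l h₁r
  have hB := hb _ h₂l h₂r
  have hC := hc _ h₁l h₁r
  have hD := hd _ h₂l h₂r
  simp only [hterm]
  exact ⟨summable_hnorm_quad hA.summable hB.summable hC.summable hD.summable,
    zSeriesTendsto_quad hA hB hC hD⟩

/-- Laurent expansion, right version: if F₁, F₃ are holomorphic on the
annulus {r < |ξ - ξ₁₀| < R} with Laurent coefficients aₙ, cₙ, and F₂, F₄ on
{r < |ξ - ξ₂₀| < R} with Laurent coefficients bₙ, dₙ, and
Φ(ζ) = F₁(ξ₁)e₁ + F₂(ξ₂)e₂ + F₃(ξ₁)e₃ + F₄(ξ₂)e₄ on K_ζ, then for every ζ ∈ K_ζ the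
series ∑_{n∈ℤ} (ζ-ζ₀)ⁿpₙ, pₙ = aₙe₁ + bₙe₂ + cₙe₃ + dₙe₄, converges absolutely in the
norm of ℍ(ℂ) to Φ(ζ). -/
theorem laurent_right (a₁ a₂ b₁ b₂ : ℂ) (x₀ y₀ z₀ : ℝ) (r R : ENNReal) (hrR : r < R)
    (F₁ F₂ F₃ F₄ : ℂ → ℂ) (a b c d : ℤ → ℂ)
    (hF₁ : DifferentiableOn ℂ F₁
      {ξ : ℂ | r < ENNReal.ofReal (‖ξ - xi1 a₁ b₁ x₀ y₀ z₀‖) ∧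
        ENNReal.ofReal (‖ξ - xi1 a₁ b₁ x₀ y₀ z₀‖) < R})
    (hF₃ : DifferentiableOn ℂ F₃
      {ξ : ℂ | r < ENNReal.ofReal (‖ξ - xi1 a₁ b₁ x₀ y₀ z₀‖) ∧
        ENNReal.ofReal (‖ξ - xi1 a₁ b₁ x₀ y₀ z₀‖) < R})
    (hF₂ : DifferentiableOn ℂ F₂
      {ξ : ℂ | r < ENNReal.ofReal (‖ξ - xi2 a₂ b₂ x₀ y₀ z₀‖) ∧
        ENNReal.ofReal (‖ξ - xi2 a₂ b₂ x₀ y₀ z₀‖) < R})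
    (hF₄ : DifferentiableOn ℂ F₄
      {ξ : ℂ | r < ENNReal.ofReal (‖ξ - xi2 a₂ b₂ x₀ y₀ z₀‖) ∧
        ENNReal.ofReal (‖ξ - xi2 a₂ b₂ x₀ y₀ z₀‖) < R})
    (ha : ∀ ξ : ℂ, r < ENNReal.ofReal (‖ξ - xi1 a₁ b₁ x₀ y₀ z₀‖) →
      ENNReal.ofReal (‖ξ - xi1 a₁ b₁ x₀ y₀ z₀‖) < R →
      HasSum (fun n : ℤ => a n * (ξ - xi1 a₁ b₁ x₀ y₀ z₀) ^ n) (F₁ ξ))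
    (hc : ∀ ξ : ℂ, r < ENNReal.ofReal (‖ξ - xi1 a₁ b₁ x₀ y₀ z₀‖) →
      ENNReal.ofReal (‖ξ - xi1 a₁ b₁ x₀ y₀ z₀‖) < R →
      HasSum (fun n : ℤ => c n * (ξ - xi1 a₁ b₁ x₀ y₀ z₀) ^ n) (F₃ ξ))
    (hb : ∀ ξ : ℂ, r < ENNReal.ofReal (‖ξ - xi2 a₂ b₂ x₀ y₀ z₀‖) →
      ENNReal.ofReal (‖ξ - xi2 a₂ b₂ x₀ y₀ z₀‖) < R →
      HasSum (fun n : ℤ => b n * (ξ - xi2 a₂ b₂ x₀ y₀ z₀) ^ n) (F₂ ξ))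
    (hd : ∀ ξ : ℂ, r < ENNReal.ofReal (‖ξ - xi2 a₂ b₂ x₀ y₀ z₀‖) →
      ENNReal.ofReal (‖ξ - xi2 a₂ b₂ x₀ y₀ z₀‖) < R →
      HasSum (fun n : ℤ => d n * (ξ - xi2 a₂ b₂ x₀ y₀ z₀) ^ n) (F₄ ξ))
    (x y z : ℝ)
    (h₁l : r < ENNReal.ofReal (‖xi1 a₁ b₁ x y z - xi1 a₁ b₁ x₀ y₀ z₀‖))
    (h₁r : ENNReal.ofReal (‖xi1 a₁ b₁ x y z - xi1 a₁ b₁ x₀ y₀ z₀‖) < R)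
    (h₂l : r < ENNReal.ofReal (‖xi2 a₂ b₂ x y z - xi2 a₂ b₂ x₀ y₀ z₀‖))
    (h₂r : ENNReal.ofReal (‖xi2 a₂ b₂ x y z - xi2 a₂ b₂ x₀ y₀ z₀‖) < R) :
    Summable (fun n : ℤ =>
      hnorm (zpowQ (zeta a₁ a₂ b₁ b₂ x y z - zeta a₁ a₂ b₁ b₂ x₀ y₀ z₀) n *
        (a n • e1 + b n • e2 + c n • e3 + d n • e4))) ∧
    ZSeriesTendsto (fun n : ℤ =>
      zpowQ (zeta a₁ a₂ b₁ b₂ x y z - zeta a₁ a₂ b₁ b₂ x₀ y₀ z₀) n *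
        (a n • e1 + b n • e2 + c n • e3 + d n • e4))
      (F₁ (xi1 a₁ b₁ x y z) • e1 + F₂ (xi2 a₂ b₂ x y z) • e2 +
       F₃ (xi1 a₁ b₁ x y z) • e3 + F₄ (xi2 a₂ b₂ x y z) • e4) :=
  laurent_right_general a₁ a₂ b₁ b₂ x₀ y₀ z₀ r R F₁ F₂ F₃ F₄ a b c d ha hc hb hd x y z h₁l h₁r h₂l
    h₂r
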